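/- Let P ⊆ ℝ^d be a full-dimensional polytope. Suppose that for every face σ of P at least one of the following holds: (i) σ, regarded as a polytope, has at least as many facets as vertices; or (ii) the number of faces of P of dimension dim σ + 1 containing σ is at least the number of facets of P containing σ. Then P has a vertex-facet assignment. -/

import Mathlib

/-!
Call a set `A` of vertices and a set `B` of facets incident if every vertex of `A` lies on every
facet of `B`. The face condition yields, for every face `σ`,
`#vert σ + #{facets ⊇ σ} ≤ max (#vertices) (#facets)`: in case (i) the facets `τ` of `σ` inject
into the facets of `P` not containing `σ` (send `τ` to a facet `G ⊇ τ` avoiding a point of `σ`;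
then `τ = σ ∩ G`), and in case (ii) the faces of dimension `dim σ + 1` above `σ` inject into the
vertices outside `σ`. Applied to `σ = ⋂ B` this bounds `#A + #B` for every incident pair, and
Hall's marriage theorem turns the bound into an injection from the smaller of the two sets into
the larger one that avoids incidences.
-/

/-- A polytope is the convex hull of a finite set of points. -/
def IsPolytope {V : Type*} [AddCommGroup V] [Module ℝ V] (P : Set V) : Prop :=
  ∃ S : Set V, S.Finite ∧ P = convexHull ℝ S

/-- A face of `Q` is a nonempty proper exposed face of `Q`. -/
def IsFaceOf {V : Type*} [NormedAddCommGroup V] [NormedSpace ℝ V] (Q F : Set V) : Prop :=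
  IsExposed ℝ Q F ∧ F.Nonempty ∧ F ≠ Q

/-- The dimension of a set: the dimension of its affine span. -/
noncomputable def polyDim {V : Type*} [NormedAddCommGroup V] [NormedSpace ℝ V]
    (Q : Set V) : ℕ :=
  Module.finrank ℝ (affineSpan ℝ Q).direction

/-- The facets of a full-dimensional polytope `P ⊆ V`: faces whose affine span has
dimension `dim V - 1`. -/
def ambientFacets {V : Type*} [NormedAddCommGroup V] [NormedSpace ℝ V]
    (P : Set V) : Set (Set V) :=
  {F | IsFaceOf P F ∧ polyDim F = Module.finrank ℝ V - 1}

/-- A vertex-facet assignment: an injective map from vertices (extreme points) to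
non-incident facets, or an injective map from facets to non-incident vertices. -/
def HasVFA {V : Type*} [NormedAddCommGroup V] [NormedSpace ℝ V] (P : Set V) : Prop :=
  (∃ f : (P.extremePoints ℝ) → (ambientFacets P), Function.Injective f ∧
      ∀ v, (v : V) ∉ (f v : Set V)) ∨
  (∃ g : (ambientFacets P) → (P.extremePoints ℝ), Function.Injective g ∧
      ∀ F : (ambientFacets P), (g F : V) ∉ (F : Set V))

open Set

theorem Set.ncard_le_ncard_of_forall_subsingleton {α β : Type*} {s : Set α} {t : Set β}
    (r : α → β → Prop) (ht : t.Finite) (hs : ∀ a ∈ s, ∃ b ∈ t, r a b)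
    (hst : ∀ b ∈ t, {a ∈ s | r a b}.Subsingleton) : s.ncard ≤ t.ncard := by
  by_cases hsf : s.Finite
  · rw [ncard_eq_toFinset_card s hsf, ncard_eq_toFinset_card t ht]
    exact Finset.card_le_card_of_forall_subsingleton r (by simpa using hs) (by simpa using hst)
  · simp [Set.Infinite.ncard hsf]

theorem exists_injective_forall_not_rel_of_card_add_card_le {α β : Type*} [Finite α] [Finite β]
    (r : α → β → Prop)
    (h : ∀ (s : Finset α) (t : Finset β), (∀ a ∈ s, ∀ b ∈ t, r a b) →
      s.card + t.card ≤ Nat.card β) :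
    ∃ f : α → β, Function.Injective f ∧ ∀ a, ¬ r a (f a) := by
  classical
  have := Fintype.ofFinite α
  have := Fintype.ofFinite β
  let N : α → Finset β := fun a => {b | ¬ r a b}
  have hall : ∀ s : Finset α, s.card ≤ (s.biUnion N).card := by
    intro s
    -- everything outside the non-neighbourhood of `s` is related to all of `s`
    have hs := h s (Finset.univ \ s.biUnion N) fun a ha b hb => by
      by_contra hab
      exact (Finset.mem_sdiff.1 hb).2 (Finset.mem_biUnion.2 ⟨a, ha, by simpa [N] using hab⟩)
    rw [Finset.card_sdiff_of_subset (Finset.subset_univ _), Finset.card_univ,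
      ← Nat.card_eq_fintype_card] at hs
    have := (s.biUnion N).card_le_univ
    rw [← Nat.card_eq_fintype_card] at this
    omega
  obtain ⟨f, hinj, hf⟩ := (Finset.all_card_le_biUnion_card_iff_exists_injective N).1 hall
  exact ⟨f, hinj, fun a => by simpa [N] using hf a⟩

theorem Set.exists_injective_forall_not_rel_of_ncard_add_ncard_le {α β : Type*} {X : Set α}
    {Y : Set β} (hX : X.Finite) (hY : Y.Finite) (r : α → β → Prop)
    (h : ∀ A ⊆ X, ∀ B ⊆ Y, (∀ a ∈ A, ∀ b ∈ B, r a b) → A.ncard + B.ncard ≤ Y.ncard) :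
    ∃ f : X → Y, Function.Injective f ∧ ∀ a : X, ¬ r a (f a) := by
  have := hX.to_subtype
  have := hY.to_subtype
  refine exists_injective_forall_not_rel_of_card_add_card_le (fun (a : X) (b : Y) => r a b)
    fun s t hst => ?_
  have hA := h (Subtype.val '' (s : Set X)) (by simp) (Subtype.val '' (t : Set Y)) (by simp)
    (by rintro _ ⟨a, ha, rfl⟩ _ ⟨b, hb, rfl⟩; exact hst a ha b hb)
  simpa [ncard_image_of_injective _ Subtype.val_injective, Nat.card_coe_set_eq] using hA

theorem Set.Finite.exists_forall_lt_mul {α : Type*} {S : Set α} (hS : S.Finite) (f g : α → ℝ) :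
    ∃ t : ℝ, ∀ v ∈ S, 0 < g v → f v < t * g v := by
  obtain ⟨M, hM⟩ := (hS.image fun v => f v / g v).bddAbove
  refine ⟨M + 1, fun v hv hg => ?_⟩
  have := hM (mem_image_of_mem _ hv)
  rw [← div_lt_iff₀ hg]
  linarith

theorem Set.Finite.exists_pos_forall_add_mul_le {α : Type*} {S : Set α} (hS : S.Finite)
    {f g : α → ℝ} {β c : ℝ} (hf : ∀ v ∈ S, f v ≤ β) (hfg : ∀ v ∈ S, c < g v → f v < β)
    (hne : ∃ v ∈ S, c < g v) :
    ∃ θ > 0, (∀ v ∈ S, f v + θ * g v ≤ β + θ * c) ∧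
      ∃ v ∈ S, c < g v ∧ f v + θ * g v = β + θ * c := by
  obtain ⟨w, ⟨hwS, hw⟩, hmin⟩ := {v ∈ S | c < g v}.exists_min_image
    (fun v => (β - f v) / (g v - c)) (hS.subset (sep_subset _ _)) hne
  set θ := (β - f w) / (g w - c)
  have hθ : 0 < θ := div_pos (sub_pos.2 (hfg w hwS hw)) (sub_pos.2 hw)
  refine ⟨θ, hθ, fun v hv => ?_, w, hwS, hw, ?_⟩
  · rcases le_or_gt (g v) c with hgv | hgv
    · nlinarith [hf v hv]
    · have := hmin v ⟨hv, hgv⟩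
      rw [le_div_iff₀ (sub_pos.2 hgv), mul_sub] at this
      linarith
  · have : θ * (g w - c) = β - f w := div_mul_cancel₀ _ (sub_pos.2 hw).ne'
    linarith [mul_sub θ (g w) c]

variable {E : Type*} [NormedAddCommGroup E] [NormedSpace ℝ E]

theorem ContinuousLinearMap.apply_eq_of_mem_affineSpan {s : Set E} {l : E →L[ℝ] ℝ} {c : ℝ}
    (h : ∀ y ∈ s, l y = c) {x : E} (hx : x ∈ affineSpan ℝ s) : l x = c := by
  refine affineSpan_induction (p := fun y => l y = c) hx h ?_
  intro a u v w hu hv hw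
  simp only [vsub_eq_sub, vadd_eq_add, map_add, map_smul, map_sub, hu, hv, hw, smul_eq_mul]
  ring

theorem ContinuousLinearMap.le_of_mem_convexHull {S : Set E} {l : E →L[ℝ] ℝ} {c : ℝ}
    (h : ∀ v ∈ S, l v ≤ c) {x : E} (hx : x ∈ convexHull ℝ S) : l x ≤ c :=
  convexHull_min h (convex_halfSpace_le l.isLinear c) hx

theorem isExposed_sep_eq {Q : Set E} {l : E →L[ℝ] ℝ} {c : ℝ} (hl : ∀ y ∈ Q, l y ≤ c) :
    IsExposed ℝ Q {x ∈ Q | l x = c} := by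
  rintro ⟨x₀, hx₀Q, hx₀⟩
  refine ⟨l, Subset.antisymm (fun x hx => ⟨hx.1, fun y hy => hx.2 ▸ hl y hy⟩) ?_⟩
  exact fun x hx => ⟨hx.1, le_antisymm (hl x hx.1) (hx₀ ▸ hx.2 x₀ hx₀Q)⟩

theorem convexHull_sep_eq_of_le {S : Set E} {l : E →L[ℝ] ℝ} {c : ℝ} (h : ∀ v ∈ S, l v ≤ c) :
    {x ∈ convexHull ℝ S | l x = c} = convexHull ℝ {v ∈ S | l v = c} := by
  have hS₁ : convexHull ℝ {v ∈ S | l v = c} ⊆ {y | l y = c} :=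
    convexHull_min (fun v hv => hv.2) (convex_hyperplane l.isLinear c)
  refine Subset.antisymm ?_ fun x hx => ⟨convexHull_mono (sep_subset _ _) hx, hS₁ hx⟩
  rintro x ⟨hx, hlx⟩
  have hS₂ : convexHull ℝ {v ∈ S | l v < c} ⊆ {y | l y < c} :=
    convexHull_min (fun v hv => hv.2) (convex_halfSpace_lt l.isLinear c)
  have hS : S = {v ∈ S | l v = c} ∪ {v ∈ S | l v < c} := by
    ext v
    simp only [mem_union, mem_sep_iff]
    constructor
    · exact fun hv => ((h v hv).eq_or_lt).imp (⟨hv, ·⟩) (⟨hv, ·⟩)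
    · rintro (hv | hv) <;> exact hv.1
  rcases eq_empty_or_nonempty {v ∈ S | l v < c} with h₂ | h₂
  · rwa [hS, h₂, union_empty] at hx
  rcases eq_empty_or_nonempty {v ∈ S | l v = c} with h₁ | h₁
  · rw [hS, h₁, empty_union] at hx
    exact absurd hlx (hS₂ hx).ne
  rw [hS, convexHull_union h₁ h₂, mem_convexJoin] at hx
  obtain ⟨a, ha, b, hb, θa, θb, -, -, hθ, rfl⟩ := hx
  -- a point of the segment `[a, b]` with `l a = c > l b` reaching level `c` is `a` itself
  have hθb : θb = 0 := by
    have hla : l a = c := hS₁ ha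
    simp only [map_add, map_smul, smul_eq_mul, hla] at hlx
    have : θb * (c - l b) = 0 := by linear_combination c * hθ - hlx
    exact (mul_eq_zero.1 this).resolve_right (sub_ne_zero.2 (hS₂ hb).ne')
  obtain rfl : θa = 1 := by linarith
  simpa [hθb] using ha

theorem polyDim_insert_le (s : Set E) (x : E) : polyDim (insert x s) ≤ polyDim s + 1 := by
  rw [polyDim, polyDim, direction_affineSpan, direction_affineSpan]
  exact finrank_vectorSpan_insert_le_set ℝ s x

theorem polyDim_of_affineSpan_eq_top {s : Set E} (hs : affineSpan ℝ s = ⊤) :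
    polyDim s = Module.finrank ℝ E := by
  rw [polyDim, hs, AffineSubspace.direction_top, finrank_top]

namespace IsFaceOf

variable {P F G : Set E}

theorem subset (h : IsFaceOf P F) : F ⊆ P := h.1.subset

theorem exists_eq_sep (h : IsFaceOf P F) :
    ∃ (l : E →L[ℝ] ℝ) (β : ℝ), (∀ y ∈ P, l y ≤ β) ∧ F = {x ∈ P | l x = β} := by
  obtain ⟨x₀, hx₀⟩ := h.2.1
  obtain ⟨l, rfl⟩ := h.1 ⟨x₀, hx₀⟩
  refine ⟨l, l x₀, hx₀.2, Subset.antisymm (fun x hx => ⟨hx.1, ?_⟩) fun x hx => ⟨hx.1, ?_⟩⟩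
  · exact le_antisymm (hx₀.2 x hx.1) (hx.2 x₀ hx₀.1)
  · exact fun y hy => hx.2 ▸ hx₀.2 y hy

theorem mem_of_mem_affineSpan (h : IsFaceOf P F) {y : E} (hy : y ∈ P)
    (hyF : y ∈ affineSpan ℝ F) : y ∈ F := by
  obtain ⟨l, β, -, rfl⟩ := h.exists_eq_sep
  exact ⟨hy, l.apply_eq_of_mem_affineSpan (fun x hx => hx.2) hyF⟩

theorem isFaceOf_of_ssubset (hF : IsFaceOf P F) (hG : IsFaceOf P G) (h : G ⊂ F) :
    IsFaceOf F G :=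
  ⟨hG.1.mono hF.subset h.subset, hG.2.1, h.ne⟩

theorem inter (hF : IsFaceOf P F) (hG : IsFaceOf P G) (hne : (F ∩ G).Nonempty) :
    IsFaceOf P (F ∩ G) :=
  ⟨hF.1.inter hG.1, hne, fun h => hF.2.2 (hF.subset.antisymm (h ▸ inter_subset_left))⟩

theorem extremePoints_eq (hF : IsFaceOf P F) : F.extremePoints ℝ = P.extremePoints ℝ ∩ F :=
  hF.1.isExtreme.extremePoints_eq.trans (inter_comm _ _)

end IsFaceOf

theorem isFaceOf_sInter {P : Set E} {B : Set (Set E)} (hB : B.Finite) (hBne : B.Nonempty)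
    (hBP : ∀ F ∈ B, IsFaceOf P F) (hne : (⋂₀ B).Nonempty) : IsFaceOf P (⋂₀ B) := by
  obtain ⟨F, hF⟩ := hBne
  refine ⟨?_, hne, fun h => (hBP F hF).2.2 ((hBP F hF).subset.antisymm ?_)⟩
  · simpa using IsExposed.sInter (F := hB.toFinset) (by simpa using ⟨F, hF⟩)
      (by simpa using fun G hG => (hBP G hG).1)
  · exact h ▸ sInter_subset_of_mem hF

namespace IsPolytope

variable {P : Set E}

theorem finite_extremePoints (hP : IsPolytope P) : (P.extremePoints ℝ).Finite := by
  obtain ⟨S, hS, rfl⟩ := hP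
  exact hS.subset extremePoints_convexHull_subset

theorem convexHull_extremePoints (hP : IsPolytope P) : convexHull ℝ (P.extremePoints ℝ) = P := by
  have hfin := hP.finite_extremePoints
  obtain ⟨S, hS, rfl⟩ := hP
  rw [← (hfin.isClosed_convexHull ℝ).closure_eq]
  exact closure_convexHull_extremePoints (hS.isCompact_convexHull ℝ) (convex_convexHull ℝ S)

end IsPolytope

namespace IsFaceOf

variable {P F G : Set E}

theorem convexHull_extremePoints (hP : IsPolytope P) (hF : IsFaceOf P F) :
    convexHull ℝ (F.extremePoints ℝ) = F := by
  obtain ⟨l, β, hl, rfl⟩ := hF.exists_eq_sep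
  conv_rhs => rw [← hP.convexHull_extremePoints]
  rw [convexHull_sep_eq_of_le fun v hv => hl v (extremePoints_subset hv), hF.extremePoints_eq]
  congr 1
  ext v
  exact ⟨fun h => ⟨h.1, h.2.2⟩, fun h => ⟨h.1, extremePoints_subset h.1, h.2⟩⟩

theorem isPolytope (hP : IsPolytope P) (hF : IsFaceOf P F) : IsPolytope F :=
  ⟨_, hP.finite_extremePoints.subset (hF.extremePoints_eq ▸ inter_subset_left),
    (hF.convexHull_extremePoints hP).symm⟩

theorem trans (hP : IsPolytope P) (hF : IsFaceOf P F) (hG : IsFaceOf F G) : IsFaceOf P G := by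
  set S := P.extremePoints ℝ
  have hGS : convexHull ℝ (S ∩ G) = G := by
    rw [← inter_eq_right.2 hG.subset, ← inter_assoc, ← hF.extremePoints_eq,
      inter_eq_right.2 hG.subset, ← hG.extremePoints_eq]
    exact hG.convexHull_extremePoints (hF.isPolytope hP)
  obtain ⟨s, α, hs, hFeq⟩ := hF.exists_eq_sep
  obtain ⟨u, γ, hu, hGeq⟩ := hG.exists_eq_sep
  obtain ⟨t, ht⟩ := hP.finite_extremePoints.exists_forall_lt_mul (fun v => u v - γ)
    (fun v => α - s v)
  -- tilting `s` by `u` keeps the vertices of `G` on top and pushes the others below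
  let L := t • s + u
  have hL : ∀ y, L y = t * s y + u y := fun y => rfl
  have hLS : ∀ v ∈ S, L v ≤ t * α + γ ∧ (L v = t * α + γ ↔ v ∈ G) := by
    intro v hv
    have hvP : v ∈ P := extremePoints_subset hv
    rw [hL]
    rcases (hs v hvP).lt_or_eq with hlt | heq
    · have hvG : v ∉ G := fun hvG => hlt.ne (hFeq ▸ hG.subset hvG).2
      have := ht v hv (sub_pos.2 hlt)
      rw [mul_sub] at this
      exact ⟨by linarith, iff_of_false (by linarith) hvG⟩
    · have hvF : v ∈ F := hFeq ▸ ⟨hvP, heq⟩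
      rw [heq, hGeq]
      exact ⟨by linarith [hu v hvF], by simp [hvF]⟩
  have hGL : G = {x ∈ P | L x = t * α + γ} := by
    rw [← hP.convexHull_extremePoints, convexHull_sep_eq_of_le fun v hv => (hLS v hv).1]
    conv_lhs => rw [← hGS]
    congr 1
    ext v
    exact ⟨fun h => ⟨h.1, (hLS v h.1).2.2 h.2⟩, fun h => ⟨h.1, (hLS v h.1).2.1 h.2⟩⟩
  refine ⟨hGL ▸ isExposed_sep_eq fun y hy => ?_, hG.2.1,
    fun h => hF.2.2 (hF.subset.antisymm (h ▸ hG.subset))⟩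
  rw [← hP.convexHull_extremePoints] at hy
  exact L.le_of_mem_convexHull (fun v hv => (hLS v hv).1) hy

theorem exists_superset_of_functional (hP : IsPolytope P) (hF : IsFaceOf P F) {x : E}
    (hxP : x ∈ P) (hxF : x ∉ F) {g : E →L[ℝ] ℝ} {c : ℝ} (hgF : ∀ y ∈ F, g y = c)
    (hgx : g x ≤ c) (hgP : ∃ w ∈ P, c < g w) :
    ∃ F', IsFaceOf P F' ∧ F ⊆ F' ∧ x ∉ F' ∧ ∃ v ∈ F', c < g v := by
  set S := P.extremePoints ℝ
  obtain ⟨l, β, hl, hFeq⟩ := hF.exists_eq_sep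
  have hgS : ∃ v ∈ S, c < g v := by
    by_contra! hS
    obtain ⟨w, hwP, hw⟩ := hgP
    rw [← hP.convexHull_extremePoints] at hwP
    exact hw.not_ge (g.le_of_mem_convexHull hS hwP)
  -- rotate the supporting hyperplane of `F` about `F` until it hits a vertex `v` with `c < g v`
  obtain ⟨θ, hθ, hLS, v, hvS, hv, hLv⟩ := hP.finite_extremePoints.exists_pos_forall_add_mul_le
    (fun v hv => hl v (extremePoints_subset hv))
    (fun v hv hgv => (hl v (extremePoints_subset hv)).lt_of_ne
      fun h => (hgF v (hFeq ▸ ⟨extremePoints_subset hv, h⟩)).not_gt hgv) hgS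
  let L := l + θ • g
  have hL : ∀ y, L y = l y + θ * g y := fun y => rfl
  have hLx : L x < β + θ * c := by
    have hlx : l x < β := (hl x hxP).lt_of_ne fun h => hxF (hFeq ▸ ⟨hxP, h⟩)
    rw [hL]
    nlinarith
  have hvF' : v ∈ {y ∈ P | L y = β + θ * c} := ⟨extremePoints_subset hvS, hLv⟩
  refine ⟨_, ⟨isExposed_sep_eq fun y hy => ?_, ⟨v, hvF'⟩, fun h => hLx.ne (h ▸ hxP).2⟩,
    fun y hy => ⟨hF.subset hy, ?_⟩, fun h => hLx.ne h.2, v, hvF', hv⟩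
  · rw [← hP.convexHull_extremePoints] at hy
    exact L.le_of_mem_convexHull hLS hy
  · rw [hL, hgF y hy, (hFeq ▸ hy : y ∈ {x ∈ P | l x = β}).2]

end IsFaceOf

theorem IsPolytope.finite_faces {P : Set E} (hP : IsPolytope P) : {F | IsFaceOf P F}.Finite := by
  refine (hP.finite_extremePoints.finite_subsets.image (convexHull ℝ)).subset fun F hF => ?_
  exact ⟨_, hF.extremePoints_eq ▸ inter_subset_left, hF.convexHull_extremePoints hP⟩

theorem IsPolytope.finite_ambientFacets {P : Set E} (hP : IsPolytope P) :
    (ambientFacets P).Finite :=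
  hP.finite_faces.subset fun _ hF => hF.1

section FiniteDimensional

variable [FiniteDimensional ℝ E]

theorem polyDim_mono {s t : Set E} (h : s ⊆ t) : polyDim s ≤ polyDim t :=
  Submodule.finrank_mono (AffineSubspace.direction_le (affineSpan_mono ℝ h))

theorem polyDim_lt_of_notMem_affineSpan {s t : Set E} (hs : s.Nonempty) (hst : s ⊆ t) {y : E}
    (hyt : y ∈ t) (hy : y ∉ affineSpan ℝ s) : polyDim s < polyDim t := by
  have hlt : affineSpan ℝ s < affineSpan ℝ t :=
    lt_of_le_of_ne (affineSpan_mono ℝ hst) fun h => hy (h ▸ subset_affineSpan ℝ t hyt)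
  exact Submodule.finrank_lt_finrank_of_lt
    (AffineSubspace.direction_lt_of_nonempty hlt ((affineSpan_nonempty (k := ℝ)).2 hs))

theorem AffineSubspace.exists_ne_zero_forall_mem_eq {A : AffineSubspace ℝ E} (hA : A ≠ ⊤)
    {p : E} (hp : p ∈ A) : ∃ g : E →L[ℝ] ℝ, g ≠ 0 ∧ ∀ y ∈ A, g y = g p := by
  have hdir : A.direction < ⊤ := by
    rw [lt_top_iff_ne_top, Ne, AffineSubspace.direction_eq_top_iff_of_nonempty ⟨p, hp⟩]
    exact hA
  obtain ⟨f, hf, hker⟩ := A.direction.exists_le_ker_of_lt_top hdir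
  refine ⟨LinearMap.toContinuousLinearMap f, by simpa using hf, fun y hy => ?_⟩
  have := hker (AffineSubspace.vsub_mem_direction hy hp)
  simp only [LinearMap.mem_ker, vsub_eq_sub, map_sub, sub_eq_zero] at this
  exact this

namespace IsFaceOf

variable {P F G : Set E}

theorem polyDim_lt (h : IsFaceOf P F) : polyDim F < polyDim P := by
  obtain ⟨y, hyP, hyF⟩ := exists_of_ssubset (h.subset.ssubset_of_ne h.2.2)
  exact polyDim_lt_of_notMem_affineSpan h.2.1 h.subset hyP
    fun hy => hyF (h.mem_of_mem_affineSpan hyP hy)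

theorem eq_of_subset_of_polyDim_le (hF : IsFaceOf P F) (hG : IsFaceOf P G) (hGF : G ⊆ F)
    (hdim : polyDim F ≤ polyDim G) : G = F := by
  by_contra hne
  exact hdim.not_gt (hF.isFaceOf_of_ssubset hG (hGF.ssubset_of_ne hne)).polyDim_lt

theorem exists_polyDim_lt (hP : IsPolytope P) (hfull : affineSpan ℝ P = ⊤) (hF : IsFaceOf P F)
    {x : E} (hxP : x ∈ P) (hxF : x ∉ F) (hspan : affineSpan ℝ (insert x F) ≠ ⊤) :
    ∃ F', IsFaceOf P F' ∧ F ⊆ F' ∧ x ∉ F' ∧ polyDim F < polyDim F' := by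
  obtain ⟨g, hg0, hg⟩ :=
    AffineSubspace.exists_ne_zero_forall_mem_eq hspan (subset_affineSpan ℝ _ (mem_insert x F))
  have hgF : ∀ y ∈ affineSpan ℝ F, g y = g x :=
    fun y hy => hg y (affineSpan_mono ℝ (subset_insert x F) hy)
  obtain ⟨w, hwP, hw⟩ : ∃ w ∈ P, g w ≠ g x := by
    by_contra! h
    have hconst : ∀ y, g y = g x :=
      fun y => g.apply_eq_of_mem_affineSpan h (hfull ▸ AffineSubspace.mem_top ℝ E y)
    exact hg0 (ContinuousLinearMap.ext fun y => by rw [hconst y, ← hconst 0, map_zero, zero_apply])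
  have hgrow : ∀ g' : E →L[ℝ] ℝ, (∀ y ∈ affineSpan ℝ F, g' y = g' x) → g' x < g' w →
      ∃ F', IsFaceOf P F' ∧ F ⊆ F' ∧ x ∉ F' ∧ polyDim F < polyDim F' := by
    intro g' hg' hw'
    obtain ⟨F', hF', hFF', hxF', v, hvF', hv⟩ := hF.exists_superset_of_functional hP hxP hxF
      (fun y hy => hg' y (subset_affineSpan ℝ F hy)) le_rfl ⟨w, hwP, hw'⟩
    exact ⟨F', hF', hFF', hxF',
      polyDim_lt_of_notMem_affineSpan hF.2.1 hFF' hvF' fun hv' => hv.ne' (hg' v hv')⟩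
  rcases hw.lt_or_gt with hlt | hgt
  · exact hgrow (-g) (by simpa using hgF) (by simpa using hlt)
  · exact hgrow g hgF hgt

theorem exists_facet_superset (hP : IsPolytope P) (hfull : affineSpan ℝ P = ⊤)
    (hF : IsFaceOf P F) {x : E} (hxP : x ∈ P) (hxF : x ∉ F) :
    ∃ G ∈ ambientFacets P, F ⊆ G ∧ x ∉ G := by
  obtain ⟨G, ⟨hG, hFG, hxG⟩, hmax⟩ := {G | IsFaceOf P G ∧ F ⊆ G ∧ x ∉ G}.exists_max_image
    polyDim (hP.finite_faces.subset fun G hG => hG.1) ⟨F, hF, subset_rfl, hxF⟩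
  refine ⟨G, ⟨hG, ?_⟩, hFG, hxG⟩
  have hlt : polyDim G < Module.finrank ℝ E := polyDim_of_affineSpan_eq_top hfull ▸ hG.polyDim_lt
  by_contra hne
  have hspan : affineSpan ℝ (insert x G) ≠ ⊤ := fun h => by
    have := polyDim_insert_le G x
    rw [polyDim_of_affineSpan_eq_top h] at this
    omega
  obtain ⟨G', hG', hGG', hxG', hdim⟩ := hG.exists_polyDim_lt hP hfull hxP hxG hspan
  exact (hmax G' ⟨hG', hFG.trans hGG', hxG'⟩).not_gt hdim

end IsFaceOf

variable {P σ : Set E}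

theorem IsFaceOf.ncard_facets_le_ncard_facets_not_superset (hP : IsPolytope P)
    (hfull : affineSpan ℝ P = ⊤) (hσ : IsFaceOf P σ) :
    {τ | IsFaceOf σ τ ∧ polyDim τ = polyDim σ - 1}.ncard ≤
      {F ∈ ambientFacets P | ¬ σ ⊆ F}.ncard := by
  refine ncard_le_ncard_of_forall_subsingleton (fun τ F => τ ⊆ F)
    (hP.finite_ambientFacets.subset (sep_subset _ _)) ?_ ?_
  · rintro τ ⟨hτ, -⟩
    obtain ⟨x, hxσ, hxτ⟩ := exists_of_ssubset (hτ.subset.ssubset_of_ne hτ.2.2)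
    obtain ⟨G, hG, hτG, hxG⟩ :=
      (hσ.trans hP hτ).exists_facet_superset hP hfull (hσ.subset hxσ) hxτ
    exact ⟨G, ⟨hG, fun hσG => hxG (hσG hxσ)⟩, hτG⟩
  · rintro G ⟨hG, hσG⟩ τ₁ ⟨⟨hτ₁, hdim₁⟩, hτ₁G⟩ τ₂ ⟨⟨hτ₂, hdim₂⟩, hτ₂G⟩
    have hρ : IsFaceOf σ (σ ∩ G) := hσ.isFaceOf_of_ssubset
      (hσ.inter hG.1 (hτ₁.2.1.mono (subset_inter hτ₁.subset hτ₁G)))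
      (inter_subset_left.ssubset_of_ne fun h => hσG (inter_eq_left.1 h))
    have hρdim := hρ.polyDim_lt
    have h₁ := hρ.eq_of_subset_of_polyDim_le hτ₁ (subset_inter hτ₁.subset hτ₁G) (by omega)
    have h₂ := hρ.eq_of_subset_of_polyDim_le hτ₂ (subset_inter hτ₂.subset hτ₂G) (by omega)
    exact h₁.trans h₂.symm

theorem IsFaceOf.ncard_faces_succ_polyDim_superset_le (hP : IsPolytope P) (hσ : IsFaceOf P σ) :
    {τ | IsFaceOf P τ ∧ polyDim τ = polyDim σ + 1 ∧ σ ⊆ τ}.ncard ≤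
      (P.extremePoints ℝ \ σ).ncard := by
  refine ncard_le_ncard_of_forall_subsingleton (fun τ v => v ∈ τ) hP.finite_extremePoints.sdiff
    ?_ ?_
  · rintro τ ⟨hτ, hdim, -⟩
    by_contra! h
    have hτσ : τ ⊆ σ := by
      rw [← hτ.convexHull_extremePoints hP]
      refine convexHull_min (fun v hv => ?_)
        (hσ.1.convex (hP.convexHull_extremePoints ▸ convex_convexHull ℝ _))
      rw [hτ.extremePoints_eq] at hv
      by_contra hvσ
      exact h v ⟨hv.1, hvσ⟩ hv.2
    have := polyDim_mono hτσ
    omega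
  · rintro v ⟨hvP, hvσ⟩ τ₁ ⟨⟨hτ₁, hdim₁, hστ₁⟩, hv₁⟩ τ₂ ⟨⟨hτ₂, hdim₂, hστ₂⟩, hv₂⟩
    have hρ := hτ₁.inter hτ₂ ⟨v, hv₁, hv₂⟩
    have hρdim : polyDim σ < polyDim (τ₁ ∩ τ₂) :=
      polyDim_lt_of_notMem_affineSpan hσ.2.1 (subset_inter hστ₁ hστ₂) ⟨hv₁, hv₂⟩
        fun h => hvσ (hσ.mem_of_mem_affineSpan (extremePoints_subset hvP) h)
    have h₁ := hτ₁.eq_of_subset_of_polyDim_le hρ inter_subset_left (by omega)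
    have h₂ := hτ₂.eq_of_subset_of_polyDim_le hρ inter_subset_right (by omega)
    exact h₁.symm.trans h₂

theorem IsFaceOf.ncard_extremePoints_add_ncard_facets_superset_le (hP : IsPolytope P)
    (hfull : affineSpan ℝ P = ⊤) (hσ : IsFaceOf P σ)
    (hcase : (σ.extremePoints ℝ).ncard ≤ {τ | IsFaceOf σ τ ∧ polyDim τ = polyDim σ - 1}.ncard ∨
      {F ∈ ambientFacets P | σ ⊆ F}.ncard ≤
        {τ | IsFaceOf P τ ∧ polyDim τ = polyDim σ + 1 ∧ σ ⊆ τ}.ncard) :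
    (σ.extremePoints ℝ).ncard + {F ∈ ambientFacets P | σ ⊆ F}.ncard ≤
      max (P.extremePoints ℝ).ncard (ambientFacets P).ncard := by
  rcases hcase with hcase | hcase
  · have hsplit : {F ∈ ambientFacets P | σ ⊆ F}.ncard + {F ∈ ambientFacets P | ¬ σ ⊆ F}.ncard =
        (ambientFacets P).ncard :=
      ncard_inter_add_ncard_sdiff_eq_ncard _ _ hP.finite_ambientFacets
    have := hσ.ncard_facets_le_ncard_facets_not_superset hP hfull
    exact le_max_of_le_right (by omega)
  · have hsplit := ncard_inter_add_ncard_sdiff_eq_ncard _ σ hP.finite_extremePoints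
    rw [← hσ.extremePoints_eq] at hsplit
    have := hσ.ncard_faces_succ_polyDim_superset_le hP
    exact le_max_of_le_left (by omega)

theorem ncard_add_ncard_le_of_forall_mem (hP : IsPolytope P) (hfull : affineSpan ℝ P = ⊤)
    (h : ∀ σ : Set E, IsFaceOf P σ →
      (σ.extremePoints ℝ).ncard ≤ {τ | IsFaceOf σ τ ∧ polyDim τ = polyDim σ - 1}.ncard ∨
      {F ∈ ambientFacets P | σ ⊆ F}.ncard ≤
        {τ | IsFaceOf P τ ∧ polyDim τ = polyDim σ + 1 ∧ σ ⊆ τ}.ncard)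
    {A : Set E} (hA : A ⊆ P.extremePoints ℝ) {B : Set (Set E)} (hB : B ⊆ ambientFacets P)
    (hAB : ∀ v ∈ A, ∀ F ∈ B, v ∈ F) :
    A.ncard + B.ncard ≤ max (P.extremePoints ℝ).ncard (ambientFacets P).ncard := by
  have hfac := hP.finite_ambientFacets
  rcases A.eq_empty_or_nonempty with rfl | hAne
  · simpa using le_max_of_le_right (ncard_le_ncard hB hfac)
  rcases B.eq_empty_or_nonempty with rfl | hBne
  · simpa using le_max_of_le_left (ncard_le_ncard hA hP.finite_extremePoints)
  have hAσ : A ⊆ ⋂₀ B := fun v hv => mem_sInter.2 (hAB v hv)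
  have hσ := isFaceOf_sInter (hfac.subset hB) hBne (fun F hF => (hB hF).1) (hAne.mono hAσ)
  calc A.ncard + B.ncard
      ≤ ((⋂₀ B).extremePoints ℝ).ncard + {F ∈ ambientFacets P | ⋂₀ B ⊆ F}.ncard := by
        refine add_le_add (ncard_le_ncard ?_ (hσ.isPolytope hP).finite_extremePoints)
          (ncard_le_ncard (fun F hF => ⟨hB hF, sInter_subset_of_mem hF⟩)
            (hfac.subset (sep_subset _ _)))
        rw [hσ.extremePoints_eq]
        exact subset_inter hA hAσ
    _ ≤ _ := hσ.ncard_extremePoints_add_ncard_facets_superset_le hP hfull (h _ hσ)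

end FiniteDimensional

/-- If for every face `σ` of `P`, either `σ` (as a polytope) has at least
as many facets as vertices, or the number of faces of `P` of dimension `dim σ + 1`
containing `σ` is at least the number of facets of `P` containing `σ`, then `P` has a
vertex-facet assignment. -/
theorem vfa_of_face_condition {d : ℕ} (P : Set (Fin d → ℝ))
    (hP : IsPolytope P) (hfull : affineSpan ℝ P = ⊤)
    (h : ∀ σ : Set (Fin d → ℝ), IsFaceOf P σ →
      (σ.extremePoints ℝ).ncard ≤ {τ | IsFaceOf σ τ ∧ polyDim τ = polyDim σ - 1}.ncard ∨
      {F ∈ ambientFacets P | σ ⊆ F}.ncard ≤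
        {τ | IsFaceOf P τ ∧ polyDim τ = polyDim σ + 1 ∧ σ ⊆ τ}.ncard) :
    HasVFA P := by
  rcases le_total (P.extremePoints ℝ).ncard (ambientFacets P).ncard with hle | hle
  · refine Or.inl (exists_injective_forall_not_rel_of_ncard_add_ncard_le hP.finite_extremePoints
      hP.finite_ambientFacets (fun v F => v ∈ F) fun A hA B hB hAB => ?_)
    exact (ncard_add_ncard_le_of_forall_mem hP hfull h hA hB hAB).trans (max_eq_right hle).le
  · refine Or.inr (exists_injective_forall_not_rel_of_ncard_add_ncard_le hP.finite_ambientFacets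
      hP.finite_extremePoints (fun F v => v ∈ F) fun B hB A hA hBA => ?_)
    rw [add_comm]
    have hAB : ∀ v ∈ A, ∀ F ∈ B, v ∈ F := fun v hv F hF => hBA F hF v hv
    exact (ncard_add_ncard_le_of_forall_mem hP hfull h hA hB hAB).trans (max_eq_left hle).le
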